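/- arXiv:2509.16770 — 2 statements merged into one kernel-verified Lean document; each statement's English description precedes it below -/
import Mathlib

section
/- Let A be a nontrivial finite abelian group, B a transitive permutation group of degree m, G ≤ A ≀ B an imprimitive permutation group of tower type (A, B), N = A^m ∩ G, and T ⊴ G a proper normal subgroup with N ⊆ T. Identify T/N with a subgroup of B ≤ S_m. If |A| · ind(t̄) > a(N) for every nonidentity element t̄ of T/N (in particular if 1/a(T/N) < |A|/a(N)), then a(T) = a(N), where a(T) is computed with respect to the degree-m|A| permutation action of T ≤ A ≀ B ≤ S_{m|A|}. -/
open scoped Classical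

noncomputable section

/-- The automorphism of `Fin m → A` induced by a permutation of `Fin m`. -/
def permMulAut (A : Type*) [Group A] (m : ℕ) : Equiv.Perm (Fin m) →* MulAut (Fin m → A) where
  toFun σ :=
    { toFun := fun f => f ∘ σ.symm
      invFun := fun f => f ∘ σ
      left_inv := fun f => by ext i; simp
      right_inv := fun f => by ext i; simp
      map_mul' := fun f g => rfl }
  map_one' := by ext f i; simp; rfl
  map_mul' σ τ := rfl

/-- The wreath product `A ≀ S_m` as a semidirect product. -/
abbrev Wreath (A : Type*) [Group A] (m : ℕ) :=
  SemidirectProduct (Fin m → A) (Equiv.Perm (Fin m)) (permMulAut A m)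

/-- The base group `A^m` inside the wreath product. -/
def basePart (A : Type*) [Group A] (m : ℕ) : Subgroup (Wreath A m) :=
  (SemidirectProduct.rightHom : Wreath A m →* Equiv.Perm (Fin m)).ker

/-- `A ≀ B` for a subgroup `B ≤ S_m`, as a subgroup of `A ≀ S_m`. -/
def wreathSub (A : Type*) [Group A] {m : ℕ} (B : Subgroup (Equiv.Perm (Fin m))) :
    Subgroup (Wreath A m) :=
  B.comap (SemidirectProduct.rightHom : Wreath A m →* Equiv.Perm (Fin m))

/-- The action of the base group on the `m|A|` points. -/
def baseToPerm (A : Type*) [Group A] (m : ℕ) : (Fin m → A) →* Equiv.Perm (Fin m × A) where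
  toFun f :=
    { toFun := fun p => (p.1, f p.1 * p.2)
      invFun := fun p => (p.1, (f p.1)⁻¹ * p.2)
      left_inv := fun p => by simp
      right_inv := fun p => by simp }
  map_one' := by
    ext p
    · rfl
    · simp [Equiv.Perm.one_apply]
  map_mul' f g := by
    ext p
    · rfl
    · simp [Equiv.Perm.mul_apply, mul_assoc]

/-- The action of `S_m` on the `m|A|` points. -/
def topToPerm (A : Type*) (m : ℕ) : Equiv.Perm (Fin m) →* Equiv.Perm (Fin m × A) where
  toFun σ := Equiv.prodCongr σ (Equiv.refl A)
  map_one' := by ext p <;> simp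
  map_mul' σ τ := by ext p <;> simp [Equiv.Perm.mul_apply]

/-- The imprimitive permutation representation of `A ≀ S_m` on `m|A|` points: each copy of `A`
acts on itself by translation, and permutations permute the copies. -/
def wreathPerm (A : Type*) [Group A] (m : ℕ) : Wreath A m →* Equiv.Perm (Fin m × A) :=
  SemidirectProduct.lift (baseToPerm A m) (topToPerm A m) (by
    intro σ
    ext f p
    · simp [baseToPerm, topToPerm, permMulAut, MulAut.conj, Equiv.Perm.mul_apply,
        Equiv.Perm.inv_def]
    · simp [baseToPerm, topToPerm, permMulAut, MulAut.conj, Equiv.Perm.mul_apply,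
        Equiv.Perm.inv_def]; rfl)


abbrev AbsGal (k : Type*) [Field k] : Type _ :=
  AlgebraicClosure k ≃ₐ[k] AlgebraicClosure k

def SurSet (k : Type*) [Field k] (G : Type*) [Group G] : Set (AbsGal k →* G) :=
  {ψ | @Continuous (AbsGal k) G _ ⊥ ψ ∧ Function.Surjective ψ}

noncomputable def permIndex {α : Type*} [Fintype α] (g : Equiv.Perm α) : ℕ :=
  Fintype.card α - Nat.card (MulAction.orbitRel.Quotient (Subgroup.zpowers g) α)

noncomputable def minIndexOf {G α : Type*} [Group G] [Fintype α]
    (ρ : G →* Equiv.Perm α) (H : Subgroup G) : ℕ :=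
  sInf ((fun g => permIndex (ρ g)) '' {g : G | g ∈ H ∧ g ≠ 1})

def relDiscNorm (k : Type*) [Field k] [NumberField k]
    (F : IntermediateField k (AlgebraicClosure k)) : ℕ :=
  if h : FiniteDimensional k F then
    haveI := h
    haveI : NumberField F := NumberField.of_module_finite k F
    (NumberField.discr F).natAbs / (NumberField.discr k).natAbs ^ Module.finrank k F
  else 0

/-- `|disc_G(ψ)|` for a homomorphism `ψ : G_k → G`, where `G` comes with a permutation
representation `ρ` on a finite set with base point `x₀`: the absolute norm of
`disc(F/k)` where `F` is the fixed field of `ψ⁻¹(Stab_G(x₀))`. -/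
def galDisc (k : Type*) [Field k] [NumberField k] {G : Type*} [Group G]
    {α : Type*} [Fintype α] (ρ : G →* Equiv.Perm α) (x₀ : α) (ψ : AbsGal k →* G) : ℕ :=
  relDiscNorm k (IntermediateField.fixedField
    (Subgroup.comap ψ (Subgroup.comap ρ (MulAction.stabilizer (Equiv.Perm α) x₀))))


/-- The pushforward `f_* Sur(G_k, G)`. -/
def pushSur (k : Type*) [Field k] {G H : Type*} [Group G] [Group H] (f : G →* H) :
    Set (AbsGal k →* H) :=
  {π | ∃ ψ ∈ SurSet k G, f.comp ψ = π}

/-- The pushforward `f_* Sur(G_k, G; X)` of the surjections with `|disc| ≤ X`. -/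
def pushSurBdd (k : Type*) [Field k] [NumberField k] {G H : Type*} [Group G] [Group H]
    {α : Type*} [Fintype α] (ρ : G →* Equiv.Perm α) (x₀ : α) (f : G →* H) (X : ℝ) :
    Set (AbsGal k →* H) :=
  {π | ∃ ψ ∈ SurSet k G, (galDisc k ρ x₀ ψ : ℝ) ≤ X ∧ f.comp ψ = π}

/-- The natural map `G/N → G/T` for `N ≤ T`. -/
def quotMapHom {G : Type*} [Group G] (N T : Subgroup G) [N.Normal] [T.Normal] (h : N ≤ T) :
    (G ⧸ N) →* (G ⧸ T) :=
  QuotientGroup.map N T (MonoidHom.id G) (by simpa using h)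

/-- `S(π) = {π₁ ∈ p_* Sur(G_k, G) : h ∘ π₁ = π}`. -/
def SpiSet (k : Type*) [Field k] {G : Type*} [Group G] (N T : Subgroup G) [N.Normal] [T.Normal]
    (hNT : N ≤ T) (π : AbsGal k →* G ⧸ T) : Set (AbsGal k →* G ⧸ N) :=
  {π₁ | π₁ ∈ pushSur k (QuotientGroup.mk' N) ∧ (quotMapHom N T hNT).comp π₁ = π}

/-- The number of `ψ` lying over `π` (along `q`) with `|disc_G(ψ)| ≤ X`. -/
def twistCount (k : Type*) [Field k] [NumberField k] {G : Type*} [Group G]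
    {α : Type*} [Fintype α] (ρ : G →* Equiv.Perm α) (x₀ : α)
    {Q : Type*} [Group Q] (q : G →* Q) (π : AbsGal k →* Q) (X : ℝ) : ℕ :=
  Nat.card {ψ : AbsGal k →* G // ψ ∈ SurSet k G ∧ q.comp ψ = π ∧ (galDisc k ρ x₀ ψ : ℝ) ≤ X}

/-- `b(k, N(π₁))`: the number of orbits of the set of minimal index elements of `N` under the
Galois action `x : t ↦ (π̃(x) t π̃(x)⁻¹)^(χ(x)⁻¹)`, where `χ` is the cyclotomic character. -/
def bOf (k : Type*) [Field k] [NumberField k] {G : Type*} [Group G] {α : Type*} [Fintype α]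
    (ρ : G →* Equiv.Perm α) (N : Subgroup G) [N.Normal] (π₁ : AbsGal k →* G ⧸ N) : ℕ :=
  Nat.card (Quot (fun (t t' : {t : G // t ∈ N ∧ permIndex (ρ t) = minIndexOf ρ N}) =>
    ∃ (x : AbsGal k) (g : G) (e : ℕ),
      QuotientGroup.mk' N g = π₁ x ∧
      (∀ ζ : AlgebraicClosure k, ζ ^ Monoid.exponent N = 1 → (x ζ) ^ e = ζ) ∧
      (t' : G) = (g * (t : G) * g⁻¹) ^ e))

/-- `|H¹_ur(k, N(π₁))|`: the number of classes of continuous 1-cocycles `G_k → N` (with the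
action through `π₁` by conjugation) that are unramified at all finite places and split at all
infinite places, modulo coboundaries. -/
def h1urCard (k : Type*) [Field k] [NumberField k] {G : Type*} [Group G]
    (N : Subgroup G) [N.Normal] (π₁ : AbsGal k →* G ⧸ N) : ℕ :=
  Nat.card (Quot (fun (f f' : {f : AbsGal k → N //
      (@Continuous (AbsGal k) N _ ⊥ f) ∧
      (∀ x y : AbsGal k, ∃ g : G, QuotientGroup.mk' N g = π₁ x ∧
        ((f (x * y) : G) = (f x : G) * (g * (f y : G) * g⁻¹))) ∧
      (∀ A : ValuationSubring (AlgebraicClosure k), A ≠ ⊤ →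
        ∃ t : N, ∀ x : AbsGal k,
          x ∈ (ValuationSubring.inertiaSubgroup k A).map
                (ValuationSubring.decompositionSubgroup k A).subtype →
          ∃ g : G, QuotientGroup.mk' N g = π₁ x ∧
            ((f x : G) = g * (t : G) * g⁻¹ * (t : G)⁻¹)) ∧
      (∀ τ : AlgebraicClosure k →+* ℂ, ∃ t : N, ∀ x : AbsGal k,
          (∀ z : AlgebraicClosure k, ‖τ (x z)‖ = ‖τ z‖) →
          ∃ g : G, QuotientGroup.mk' N g = π₁ x ∧
            ((f x : G) = g * (t : G) * g⁻¹ * (t : G)⁻¹))}) =>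
    ∃ t : N, ∀ x : AbsGal k, ∃ g : G, QuotientGroup.mk' N g = π₁ x ∧
      ((f'.1 x : G) = (f.1 x : G) * (g * (t : G) * g⁻¹ * (t : G)⁻¹))))


/-- `G` is a transitive subgroup of `S_m`. -/
def IsTransitiveSub {m : ℕ} (B : Subgroup (Equiv.Perm (Fin m))) : Prop :=
  ∀ i j : Fin m, ∃ σ ∈ B, σ i = j

/-- `G ≤ A ≀ B` is an imprimitive permutation group of tower type `(A, B)`: it surjects
onto `B` and `A^m ∩ G` surjects onto `A` through each of the `m` coordinate projections. -/
structure IsTowerType (A : Type*) [Group A] {m : ℕ} (B : Subgroup (Equiv.Perm (Fin m)))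
    (G : Subgroup (Wreath A m)) : Prop where
  le : G ≤ wreathSub A B
  surj_right : Subgroup.map (SemidirectProduct.rightHom :
      Wreath A m →* Equiv.Perm (Fin m)) G = B
  surj_coord : ∀ i : Fin m, Subgroup.map (Pi.evalMonoidHom (fun _ : Fin m => A) i)
      (G.comap (SemidirectProduct.inl : (Fin m → A) →* Wreath A m)) = ⊤

/-- The degree `m|A|` permutation representation of a subgroup of `A ≀ S_m`. -/
def wreathRho (A : Type*) [Group A] (m : ℕ) (G : Subgroup (Wreath A m)) :
    ↥G →* Equiv.Perm (Fin m × A) :=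
  (wreathPerm A m).comp G.subtype

/-- The projection of a subgroup of `A ≀ S_m` onto `S_m`. -/
def wreathRight (A : Type*) [Group A] (m : ℕ) (G : Subgroup (Wreath A m)) :
    ↥G →* Equiv.Perm (Fin m) :=
  (SemidirectProduct.rightHom : Wreath A m →* Equiv.Perm (Fin m)).comp G.subtype

/-- A pure element of `A ≀ B`: its image in `B` is trivial and exactly one of its `m`
coordinates in `A` is nontrivial. -/
def IsPure {A : Type*} [Group A] {m : ℕ} (g : Wreath A m) : Prop :=
  g.right = 1 ∧ ∃! i : Fin m, g.left i ≠ 1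


lemma fst_wreathPerm {A : Type*} [Group A] {m : ℕ} (w : Wreath A m) (x : Fin m × A) :
    (wreathPerm A m w x).1 = w.right x.1 := rfl

lemma orbitQuot_card_le (A : Type*) [Group A] [Fintype A] (m : ℕ) (w : Wreath A m) :
    Nat.card (MulAction.orbitRel.Quotient (Subgroup.zpowers (wreathPerm A m w)) (Fin m × A))
      ≤ Fintype.card A *
        Nat.card (MulAction.orbitRel.Quotient (Subgroup.zpowers w.right) (Fin m)) := by
  classical
  set p := wreathPerm A m w with hp
  set σ := w.right with hσ
  set Qp := MulAction.orbitRel.Quotient (Subgroup.zpowers p) (Fin m × A) with hQp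
  set Qσ := MulAction.orbitRel.Quotient (Subgroup.zpowers σ) (Fin m) with hQσ
  have exactp : ∀ {x y : Fin m × A},
      (Quotient.mk'' x : Qp) = Quotient.mk'' y → ∃ k : ℤ, (p ^ k) y = x := by
    intro x y h
    have h' := Quotient.exact' h
    rw [MulAction.orbitRel_apply, MulAction.mem_orbit_iff] at h'
    obtain ⟨⟨q, hq⟩, h'⟩ := h'
    obtain ⟨k, rfl⟩ := Subgroup.mem_zpowers_iff.mp hq
    exact ⟨k, h'⟩
  have exactσ : ∀ {x y : Fin m},
      (Quotient.mk'' x : Qσ) = Quotient.mk'' y → ∃ k : ℤ, (σ ^ k) y = x := by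
    intro x y h
    have h' := Quotient.exact' h
    rw [MulAction.orbitRel_apply, MulAction.mem_orbit_iff] at h'
    obtain ⟨⟨q, hq⟩, h'⟩ := h'
    obtain ⟨k, rfl⟩ := Subgroup.mem_zpowers_iff.mp hq
    exact ⟨k, h'⟩
  have soundp : ∀ (k : ℤ) (x : Fin m × A),
      (Quotient.mk'' ((p ^ k) x) : Qp) = Quotient.mk'' x := by
    intro k x
    apply Quotient.sound'
    rw [MulAction.orbitRel_apply, MulAction.mem_orbit_iff]
    exact ⟨⟨p ^ k, Subgroup.mem_zpowers_iff.mpr ⟨k, rfl⟩⟩, rfl⟩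
  have key : ∀ c : Qp, ∃ a : A,
      (Quotient.mk'' ((Quotient.mk'' (Quotient.out c).1 : Qσ).out, a) : Qp) = c := by
    intro c
    set x := Quotient.out c with hx
    have hc : (Quotient.mk'' x : Qp) = c := Quotient.out_eq' c
    set q : Qσ := Quotient.mk'' x.1 with hq
    have hqq : (Quotient.mk'' q.out : Qσ) = Quotient.mk'' x.1 := Quotient.out_eq' q
    obtain ⟨k, hk⟩ := exactσ hqq
    refine ⟨((p ^ k) x).2, ?_⟩
    have h1 : ((p ^ k) x).1 = q.out := by
      rw [show p ^ k = wreathPerm A m (w ^ k) from (map_zpow (wreathPerm A m) w k).symm,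
        fst_wreathPerm]
      rw [show (w ^ k).right = σ ^ k from map_zpow SemidirectProduct.rightHom w k]
      exact hk
    have h2 : (q.out, ((p ^ k) x).2) = (p ^ k) x := by
      exact Prod.ext h1.symm rfl
    rw [h2, soundp k x]
    exact hc
  have inj : Function.Injective
      (fun c : Qp => ((Quotient.mk'' (Quotient.out c).1 : Qσ), Classical.choose (key c))) := by
    intro c c' h
    simp only [Prod.mk.injEq] at h
    obtain ⟨h1, h2⟩ := h
    have e1 := Classical.choose_spec (key c)
    have e2 := Classical.choose_spec (key c')
    have hpair : ((Quotient.mk'' (Quotient.out c).1 : Qσ).out, Classical.choose (key c))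
        = ((Quotient.mk'' (Quotient.out c').1 : Qσ).out, Classical.choose (key c')) :=
      Prod.ext (congrArg Quotient.out h1) h2
    exact e1.symm.trans ((congrArg Quotient.mk'' hpair).trans e2)
  have hle := Nat.card_le_card_of_injective _ inj
  rw [Nat.card_prod] at hle
  rw [Nat.card_eq_fintype_card (α := A)] at hle
  exact le_of_le_of_eq hle (mul_comm _ _)

lemma permIndex_wreath_ge (A : Type*) [Group A] [Fintype A] (m : ℕ) (w : Wreath A m) :
    Fintype.card A * permIndex w.right ≤ permIndex (wreathPerm A m w) := by
  have h1 := orbitQuot_card_le A m w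
  unfold permIndex
  rw [Fintype.card_prod, Fintype.card_fin, Nat.mul_sub, mul_comm (Fintype.card A) m]
  exact Nat.sub_le_sub_left h1 _

/-- If `|A| · ind(t̄) > a(N)` for every nonidentity `t̄ ∈ T/N ≤ B`, then `a(T) = a(N)`. -/
theorem aT_eq_aN
    (A : Type*) [CommGroup A] [Fintype A] [Nontrivial A]
    (m : ℕ) (hm : 0 < m)
    (B : Subgroup (Equiv.Perm (Fin m))) (hB : IsTransitiveSub B)
    (G : Subgroup (Wreath A m)) (hG : IsTowerType A B G)
    (N : Subgroup ↥G) (hN : N = (basePart A m).subgroupOf G)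
    (T : Subgroup ↥G) [T.Normal] (hT : T ≠ ⊤) (hNT : N ≤ T)
    (hyp : ∀ t ∈ T.map (wreathRight A m G), t ≠ 1 →
      minIndexOf (wreathRho A m G) N < Fintype.card A * permIndex t) :
    minIndexOf (wreathRho A m G) T = minIndexOf (wreathRho A m G) N := by
  classical
  obtain ⟨a, ha⟩ := exists_ne (1 : A)
  have hc := hG.surj_coord ⟨0, hm⟩
  have hmem : a ∈ Subgroup.map (Pi.evalMonoidHom (fun _ : Fin m => A) ⟨0, hm⟩)
      (G.comap (SemidirectProduct.inl : (Fin m → A) →* Wreath A m)) := hc ▸ Subgroup.mem_top a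
  obtain ⟨f, hf, hfa⟩ := hmem
  set n : ↥G := ⟨SemidirectProduct.inl f, hf⟩ with hn
  have hnN : n ∈ N := by
    rw [hN]
    refine Subgroup.mem_subgroupOf.mpr ?_
    show SemidirectProduct.inl f ∈ (SemidirectProduct.rightHom :
      Wreath A m →* Equiv.Perm (Fin m)).ker
    rw [MonoidHom.mem_ker, SemidirectProduct.rightHom_inl]
  have hn1 : n ≠ 1 := by
    intro h
    apply ha
    have h2 : SemidirectProduct.inl f = (1 : Wreath A m) := congrArg Subtype.val h
    have h3 : f = 1 := SemidirectProduct.inl_injective h2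
    rw [← hfa, h3]
    rfl
  set ρ := wreathRho A m G with hρ
  set SN := (fun g => permIndex (ρ g)) '' {g : ↥G | g ∈ N ∧ g ≠ 1} with hSN
  set ST := (fun g => permIndex (ρ g)) '' {g : ↥G | g ∈ T ∧ g ≠ 1} with hST
  have hSNne : SN.Nonempty := ⟨_, ⟨n, ⟨hnN, hn1⟩, rfl⟩⟩
  have hsub : SN ⊆ ST := by
    rintro v ⟨g, ⟨hg, hg1⟩, rfl⟩
    exact ⟨g, ⟨hNT hg, hg1⟩, rfl⟩
  have hmemN : sInf SN ∈ SN := Nat.sInf_mem hSNne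
  have h1 : sInf ST ≤ sInf SN := Nat.sInf_le (hsub hmemN)
  have h2 : ∀ v ∈ ST, sInf SN ≤ v := by
    rintro v ⟨t, ⟨htT, ht1⟩, rfl⟩
    by_cases htN : t ∈ N
    · exact Nat.sInf_le ⟨t, ⟨htN, ht1⟩, rfl⟩
    · have hσ : wreathRight A m G t ≠ 1 := by
        intro h
        exact htN (hN ▸ Subgroup.mem_subgroupOf.mpr (MonoidHom.mem_ker.mpr h))
      have hlt' : sInf SN < Fintype.card A * permIndex ((t : Wreath A m).right) :=
        hyp _ ⟨t, htT, rfl⟩ hσ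
      have hge' : Fintype.card A * permIndex ((t : Wreath A m).right) ≤ permIndex (ρ t) :=
        permIndex_wreath_ge A m _
      show sInf SN ≤ permIndex (ρ t)
      omega
  have h2' : sInf SN ≤ sInf ST := h2 _ (Nat.sInf_mem (hSNne.mono hsub))
  show sInf ST = sInf SN
  exact le_antisymm h1 h2'


end
end

section
/- Let B ≤ S_m be a permutation group and T′ ≤ B an abelian normal permutation subgroup of B that contains no transposition of S_m. Then a(T′) ≥ 2; consequently, if A = C_t with t ≥ 2 and G ≤ A ≀ B is an imprimitive permutation group of tower type (A, B) containing a pure element, and T = f^{-1}(T′) for f: G → B the surjection onto B and N = A^m ∩ G, then 1/a(T/N) + 1/2 < |A|/a(N). -/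
open scoped Classical

noncomputable section

/-! ### Auxiliary counting lemmas -/

lemma card_add_le_of_surj {α β : Type*} [Fintype α] [Fintype β] [DecidableEq β] {f : α → β}
    (hf : Function.Surjective f) (S : Finset α) :
    Fintype.card β + S.card ≤ Fintype.card α + (S.image f).card := by
  classical
  have h1 : (Finset.univ : Finset β) = (Finset.univ : Finset α).image f := by
    ext b; simpa using hf b
  have h3 : Fintype.card β ≤ (S.image f).card + Sᶜ.card := by
    calc Fintype.card β = ((Finset.univ : Finset α).image f).card := by
          rw [← h1, Finset.card_univ]
      _ = ((S ∪ Sᶜ).image f).card := by rw [Finset.union_compl]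
      _ = (S.image f ∪ Sᶜ.image f).card := by rw [Finset.image_union]
      _ ≤ (S.image f).card + (Sᶜ.image f).card := Finset.card_union_le _ _
      _ ≤ (S.image f).card + Sᶜ.card := by gcongr; exact Finset.card_image_le
  have h4 : Sᶜ.card + S.card = Fintype.card α := Finset.card_compl_add_card S
  omega

lemma nat_card_pair {α β : Type*} [Fintype α] {f : α → β} (hf : Function.Surjective f)
    {a b : α} (hab : a ≠ b) (h1 : f a = f b) : Nat.card β + 1 ≤ Fintype.card α := by
  classical
  haveI : Finite β := Finite.of_surjective f hf
  letI : Fintype β := Fintype.ofFinite β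
  rw [Nat.card_eq_fintype_card]
  have key := card_add_le_of_surj hf {a, b}
  have hS : ({a, b} : Finset α).card = 2 := Finset.card_pair hab
  have him : (({a, b} : Finset α).image f).card ≤ 1 := by
    rw [Finset.image_insert, Finset.image_singleton, ← h1]
    simp
  omega

lemma nat_card_triple {α β : Type*} [Fintype α] {f : α → β} (hf : Function.Surjective f)
    {a b c : α} (hab : a ≠ b) (hac : a ≠ c) (hbc : b ≠ c)
    (h1 : f a = f b) (h2 : f a = f c) : Nat.card β + 2 ≤ Fintype.card α := by
  classical
  haveI : Finite β := Finite.of_surjective f hf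
  letI : Fintype β := Fintype.ofFinite β
  rw [Nat.card_eq_fintype_card]
  have key := card_add_le_of_surj hf {a, b, c}
  have hS : ({a, b, c} : Finset α).card = 3 := by
    rw [Finset.card_insert_of_notMem (by simp [hab, hac]),
      Finset.card_insert_of_notMem (by simp [hbc]), Finset.card_singleton]
  have him : (({a, b, c} : Finset α).image f).card ≤ 1 := by
    rw [Finset.image_insert, Finset.image_insert, Finset.image_singleton, ← h1, ← h2]
    simp
  omega

lemma nat_card_two_pairs {α β : Type*} [Fintype α] {f : α → β} (hf : Function.Surjective f)
    {a b c d : α} (hab : a ≠ b) (hcd : c ≠ d) (h1 : f a = f b) (h2 : f c = f d)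
    (h3 : f a ≠ f c) : Nat.card β + 2 ≤ Fintype.card α := by
  classical
  haveI : Finite β := Finite.of_surjective f hf
  letI : Fintype β := Fintype.ofFinite β
  rw [Nat.card_eq_fintype_card]
  have hac : a ≠ c := fun h => h3 (by rw [h])
  have had : a ≠ d := fun h => h3 (by rw [h, ← h2])
  have hbc : b ≠ c := fun h => h3 (by rw [h1, h])
  have hbd : b ≠ d := fun h => h3 (by rw [h1, h, ← h2])
  have key := card_add_le_of_surj hf {a, b, c, d}
  have hS : ({a, b, c, d} : Finset α).card = 4 := by
    rw [Finset.card_insert_of_notMem (by simp [hab, hac, had]),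
      Finset.card_insert_of_notMem (by simp [hbc, hbd]),
      Finset.card_insert_of_notMem (by simp [hcd]), Finset.card_singleton]
  have him : (({a, b, c, d} : Finset α).image f).card ≤ 2 := by
    rw [Finset.image_insert, Finset.image_insert, Finset.image_insert,
      Finset.image_singleton, ← h1, ← h2]
    have hsub : ({f a, f a, f c, f c} : Finset β) ⊆ {f a, f c} := by
      intro z hz
      simp only [Finset.mem_insert, Finset.mem_singleton] at hz ⊢
      tauto
    exact le_trans (Finset.card_le_card hsub) (le_trans (Finset.card_insert_le _ _) (by simp))
  omega

lemma orbitQuot_mk_eq_iff {α : Type*} (g : Equiv.Perm α) (x y : α) :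
    (Quotient.mk'' x : MulAction.orbitRel.Quotient (Subgroup.zpowers g) α) = Quotient.mk'' y ↔
      ∃ k : ℤ, (g ^ k) y = x := by
  rw [Quotient.eq'']
  show (MulAction.orbitRel (Subgroup.zpowers g) α) x y ↔ _
  rw [MulAction.orbitRel_apply, MulAction.mem_orbit_iff]
  constructor
  · rintro ⟨h, hh⟩
    obtain ⟨k, hk⟩ := Subgroup.mem_zpowers_iff.mp h.2
    refine ⟨k, ?_⟩
    rw [hk]
    exact hh
  · rintro ⟨k, hk⟩
    exact ⟨⟨g ^ k, Subgroup.zpow_mem _ (Subgroup.mem_zpowers g) k⟩, hk⟩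

lemma orbitQuot_mk_apply {α : Type*} (g : Equiv.Perm α) (x : α) :
    (Quotient.mk'' (g x) : MulAction.orbitRel.Quotient (Subgroup.zpowers g) α) =
      Quotient.mk'' x :=
  (orbitQuot_mk_eq_iff g _ x).mpr ⟨1, by simp⟩

lemma permIndex_pos' {α : Type*} [Fintype α] {g : Equiv.Perm α} (hg : g ≠ 1) :
    1 ≤ permIndex g := by
  obtain ⟨x, hx⟩ : ∃ x, g x ≠ x := by
    by_contra h
    push_neg at h
    exact hg (Equiv.ext h)
  have key : Nat.card (MulAction.orbitRel.Quotient (Subgroup.zpowers g) α) + 1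
      ≤ Fintype.card α :=
    nat_card_pair (Quotient.mk''_surjective
      (s₁ := MulAction.orbitRel (Subgroup.zpowers g) α)) (Ne.symm hx)
      (orbitQuot_mk_apply g x).symm
  unfold permIndex
  omega

lemma permIndex_two_le' {α : Type*} [Fintype α] [DecidableEq α] {g : Equiv.Perm α} (hg : g ≠ 1)
    (hsw : ¬ g.IsSwap) : 2 ≤ permIndex g := by
  set q : α → MulAction.orbitRel.Quotient (Subgroup.zpowers g) α := Quotient.mk'' with hq
  have hqs : Function.Surjective q := Quotient.mk''_surjective
  have h3 : 3 ≤ g.support.card := by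
    have h2 := Equiv.Perm.one_lt_card_support_of_ne_one hg
    have hne : g.support.card ≠ 2 := fun h => hsw (Equiv.Perm.card_support_eq_two.mp h)
    omega
  obtain ⟨a, ha⟩ := Finset.card_pos.mp (by omega : 0 < g.support.card)
  have h2 : 1 < (g.support.erase a).card := by
    rw [Finset.card_erase_of_mem ha]; omega
  obtain ⟨b, hb, c, hc, hbc⟩ := Finset.one_lt_card.mp h2
  have hab : a ≠ b := fun h => (Finset.mem_erase.mp hb).1 h.symm
  have hac : a ≠ c := fun h => (Finset.mem_erase.mp hc).1 h.symm
  have hb' : b ∈ g.support := (Finset.mem_erase.mp hb).2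
  have hc' : c ∈ g.support := (Finset.mem_erase.mp hc).2
  have key : Nat.card (MulAction.orbitRel.Quotient (Subgroup.zpowers g) α) + 2
      ≤ Fintype.card α := by
    by_cases hcase : q a = q b ∧ q a = q c
    · exact nat_card_triple hqs hab hac hbc hcase.1 hcase.2
    · have hxy : ∃ x ∈ g.support, ∃ y ∈ g.support, q x ≠ q y := by
        rcases not_and_or.mp hcase with h | h
        · exact ⟨a, ha, b, hb', h⟩
        · exact ⟨a, ha, c, hc', h⟩
      obtain ⟨x, hx, y, hy, hxy⟩ := hxy
      have hgx : g x ≠ x := Equiv.Perm.mem_support.mp hx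
      have hgy : g y ≠ y := Equiv.Perm.mem_support.mp hy
      exact nat_card_two_pairs hqs (Ne.symm hgx) (Ne.symm hgy)
        (orbitQuot_mk_apply g x).symm (orbitQuot_mk_apply g y).symm hxy
  unfold permIndex
  omega

lemma baseToPerm_apply {A : Type*} [Group A] {m : ℕ} (h : Fin m → A) (p : Fin m × A) :
    baseToPerm A m h p = (p.1, h p.1 * p.2) := rfl

lemma permIndex_pure_le {A : Type*} [Group A] [Fintype A] {m : ℕ} (hm : 0 < m)
    (f : Fin m → A) (i : Fin m) (hf : ∀ j, j ≠ i → f j = 1) :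
    permIndex (baseToPerm A m f) ≤ Fintype.card A - 1 := by
  set g : Equiv.Perm (Fin m × A) := baseToPerm A m f with hg
  set Q := MulAction.orbitRel.Quotient (Subgroup.zpowers g) (Fin m × A) with hQdef
  have hfix : ∀ (k : ℤ) (j : Fin m) (b : A), j ≠ i → (g ^ k) (j, b) = (j, b) := by
    intro k j b hj
    have h1 : g ^ k = baseToPerm A m (f ^ k) := by
      rw [hg, ← map_zpow]
    rw [h1, baseToPerm_apply]
    simp [hf j hj]
  have hinj : Function.Injective (fun z : ({j : Fin m // j ≠ i} × A) ⊕ Unit =>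
      match z with
      | Sum.inl (j, b) => (Quotient.mk'' (j.1, b) : Q)
      | Sum.inr _ => (Quotient.mk'' (i, 1) : Q)) := by
    rintro (⟨j, b⟩ | u) (⟨j', b'⟩ | u') h
    · simp only at h
      obtain ⟨k, hk⟩ := (orbitQuot_mk_eq_iff g _ _).mp h
      rw [hfix k j'.1 b' j'.2] at hk
      obtain ⟨h1, h2⟩ := Prod.mk.injEq .. ▸ hk
      simp [Subtype.ext h1.symm, h2.symm]
    · exfalso
      obtain ⟨k, hk⟩ := (orbitQuot_mk_eq_iff g _ _).mp h.symm
      rw [hfix k j.1 b j.2] at hk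
      exact j.2 (congrArg Prod.fst hk)
    · exfalso
      obtain ⟨k, hk⟩ := (orbitQuot_mk_eq_iff g _ _).mp h
      rw [hfix k j'.1 b' j'.2] at hk
      exact j'.2 (congrArg Prod.fst hk)
    · rfl
  haveI : Finite Q := Quotient.finite _
  letI : Fintype Q := Fintype.ofFinite Q
  have hcardle : Fintype.card (({j : Fin m // j ≠ i} × A) ⊕ Unit) ≤ Fintype.card Q :=
    Fintype.card_le_of_injective _ hinj
  have hcardsum : Fintype.card (({j : Fin m // j ≠ i} × A) ⊕ Unit)
      = (m - 1) * Fintype.card A + 1 := by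
    rw [Fintype.card_sum, Fintype.card_prod]
    have : Fintype.card {j : Fin m // j ≠ i} = m - 1 := by
      rw [Fintype.card_subtype_compl, Fintype.card_subtype_eq, Fintype.card_fin]
    rw [this]
    simp
  have hQge : (m - 1) * Fintype.card A + 1 ≤ Nat.card Q := by
    rw [Nat.card_eq_fintype_card]
    omega
  have hcardα : Fintype.card (Fin m × A) = m * Fintype.card A := by simp
  unfold permIndex
  rw [hcardα, ← hQdef]
  obtain ⟨m', rfl⟩ : ∃ m', m = m' + 1 := ⟨m - 1, by omega⟩
  have h1 : (m' + 1) * Fintype.card A = m' * Fintype.card A + Fintype.card A := by ring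
  have h2 : (m' + 1 - 1) = m' := rfl
  rw [h2] at hQge
  have hA : 1 ≤ Fintype.card A := Fintype.card_pos
  omega


/-- An abelian normal subgroup `T′ ≤ B` containing no transposition has `a(T′) ≥ 2`;
consequently, for a tower type group `G ≤ C_t ≀ B` containing a pure element and
`T = f⁻¹(T′)`, one has `1/a(T/N) + 1/2 < |A|/a(N)`. -/
theorem noswap_index_ineq
    (m : ℕ) (hm : 0 < m)
    (B : Subgroup (Equiv.Perm (Fin m)))
    (T' : Subgroup (Equiv.Perm (Fin m))) (hT'le : T' ≤ B)
    (hT'ab : ∀ x ∈ T', ∀ y ∈ T', x * y = y * x)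
    (hT'norm : ∀ b ∈ B, ∀ x ∈ T', b * x * b⁻¹ ∈ T')
    (hT'noswap : ∀ σ ∈ T', ¬ σ.IsSwap)
    (t : ℕ) (ht : 2 ≤ t)
    (A : Type*) [CommGroup A] [Fintype A] [IsCyclic A] (hcard : Fintype.card A = t)
    (G : Subgroup (Wreath A m)) (hG : IsTowerType A B G)
    (hpure : ∃ g : ↥G, IsPure (g : Wreath A m))
    (N : Subgroup ↥G) (hN : N = (basePart A m).subgroupOf G)
    (T : Subgroup ↥G) (hTdef : T = T'.comap (wreathRight A m G)) :
    (∀ σ ∈ T', σ ≠ 1 → 2 ≤ permIndex σ) ∧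
    ((minIndexOf (MonoidHom.id (Equiv.Perm (Fin m)))
        (T.map (wreathRight A m G)) : ℝ))⁻¹ + 1 / 2
      < (Fintype.card A : ℝ) / (minIndexOf (wreathRho A m G) N : ℝ) := by
  classical
  have part1 : ∀ σ ∈ T', σ ≠ 1 → 2 ≤ permIndex σ := fun σ hσ hσ1 =>
    permIndex_two_le' hσ1 (hT'noswap σ hσ)
  refine ⟨part1, ?_⟩
  -- the image of `T` in `S_m` is `T'`
  have hrange : (wreathRight A m G).range = B := by
    rw [wreathRight, MonoidHom.range_comp, Subgroup.range_subtype]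
    exact hG.surj_right
  have hTmap : T.map (wreathRight A m G) = T' := by
    rw [hTdef, Subgroup.map_comap_eq, hrange, inf_eq_right.mpr hT'le]
  rw [hTmap]
  -- membership in `N`
  have hmemN : ∀ n : ↥G, n ∈ N ↔ (n : Wreath A m).right = 1 := by
    intro n
    rw [hN, Subgroup.mem_subgroupOf]
    show (n : Wreath A m) ∈ (SemidirectProduct.rightHom).ker ↔ _
    rw [MonoidHom.mem_ker]
    rfl
  -- `wreathRho` on base elements
  have rho_eq : ∀ n : ↥G, (n : Wreath A m).right = 1 →
      wreathRho A m G n = baseToPerm A m (n : Wreath A m).left := by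
    intro n hn
    show wreathPerm A m (n : Wreath A m) = _
    conv_lhs => rw [← SemidirectProduct.inl_left_mul_inr_right (n : Wreath A m)]
    rw [map_mul, hn]
    simp [wreathPerm, SemidirectProduct.lift_inl, SemidirectProduct.lift_inr]
  have base_ne_one : ∀ f : Fin m → A, f ≠ 1 → baseToPerm A m f ≠ 1 := by
    intro f hf hc
    apply hf
    funext j
    have := congrArg (fun σ : Equiv.Perm (Fin m × A) => σ (j, 1)) hc
    simp only [baseToPerm_apply, mul_one, Equiv.Perm.one_apply] at this
    simpa using congrArg Prod.snd this
  -- the pure element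
  obtain ⟨gp, hgpr, i, hgpi, hgpu⟩ := hpure
  have hgpN : gp ∈ N := (hmemN gp).mpr hgpr
  have hgp1 : gp ≠ 1 := by
    intro h
    apply hgpi
    rw [h]
    simp
  have hfpure : ∀ j, j ≠ i → (gp : Wreath A m).left j = 1 := by
    intro j hj
    by_contra hc
    exact hj (hgpu j hc)
  -- bounds on `minIndexOf (wreathRho A m G) N`
  have haN_ub : minIndexOf (wreathRho A m G) N ≤ Fintype.card A - 1 := by
    have hmem : permIndex ((wreathRho A m G) gp) ∈
        (fun g => permIndex ((wreathRho A m G) g)) '' {g : ↥G | g ∈ N ∧ g ≠ 1} :=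
      ⟨gp, ⟨hgpN, hgp1⟩, rfl⟩
    refine le_trans (Nat.sInf_le hmem) ?_
    rw [rho_eq gp hgpr]
    exact permIndex_pure_le hm _ i hfpure
  have haN_lb : 1 ≤ minIndexOf (wreathRho A m G) N := by
    have hne : ((fun g => permIndex ((wreathRho A m G) g)) ''
        {g : ↥G | g ∈ N ∧ g ≠ 1}).Nonempty := ⟨_, gp, ⟨hgpN, hgp1⟩, rfl⟩
    obtain ⟨n, ⟨hnN, hn1⟩, hnv⟩ := Nat.sInf_mem hne
    rw [minIndexOf, ← hnv]
    show 1 ≤ permIndex ((wreathRho A m G) n)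
    have hright : (n : Wreath A m).right = 1 := (hmemN n).mp hnN
    rw [rho_eq n hright]
    apply permIndex_pos'
    apply base_ne_one
    intro hleft
    apply hn1
    apply Subtype.ext
    show (n : Wreath A m) = 1
    ext x
    · rw [hleft]; simp
    · rw [hright]; simp
  -- bound on `minIndexOf` for `T'`
  have haT : minIndexOf (MonoidHom.id (Equiv.Perm (Fin m))) T' = 0 ∨
      2 ≤ minIndexOf (MonoidHom.id (Equiv.Perm (Fin m))) T' := by
    rcases ((fun g => permIndex ((MonoidHom.id (Equiv.Perm (Fin m))) g)) ''
        {g | g ∈ T' ∧ g ≠ 1}).eq_empty_or_nonempty with h | h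
    · left
      rw [minIndexOf, h]
      exact Nat.sInf_empty
    · right
      obtain ⟨σ, ⟨hσT, hσ1⟩, hσv⟩ := Nat.sInf_mem h
      rw [minIndexOf, ← hσv]
      exact part1 σ hσT hσ1
  -- final real arithmetic
  have hcA2 : 2 ≤ Fintype.card A := by rw [hcard]; exact ht
  have haNlt : minIndexOf (wreathRho A m G) N < Fintype.card A := by omega
  have hy0 : (0 : ℝ) < (minIndexOf (wreathRho A m G) N : ℝ) := by exact_mod_cast haN_lb
  have hylt : ((minIndexOf (wreathRho A m G) N : ℕ) : ℝ) < (Fintype.card A : ℝ) := by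
    exact_mod_cast haNlt
  have hRHS : 1 < (Fintype.card A : ℝ) / (minIndexOf (wreathRho A m G) N : ℝ) :=
    (one_lt_div hy0).mpr hylt
  have hLHS : ((minIndexOf (MonoidHom.id (Equiv.Perm (Fin m))) T' : ℝ))⁻¹ + 1 / 2 ≤ 1 := by
    rcases haT with h | h
    · rw [h]
      norm_num
    · have h2 : (2 : ℝ) ≤ (minIndexOf (MonoidHom.id (Equiv.Perm (Fin m))) T' : ℝ) := by
        exact_mod_cast h
      have hinv : ((minIndexOf (MonoidHom.id (Equiv.Perm (Fin m))) T' : ℝ))⁻¹ ≤ 2⁻¹ := by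
        exact inv_anti₀ (by norm_num) h2
      rw [one_div] at *
      linarith
  linarith

end
end
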